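/- Let G be the 3-SAT total-bondage construction (variable gadgets H_i on {u_i, ū_i, v_i, v_i'} with edges v_iu_i, u_iū_i, ū_iv_i, v_iv_i'; clause vertices c_j adjacent to their three literals; gadget H on {s_1,…,s_5} with edges s_1s_2, s_1s_4, s_2s_3, s_2s_4, s_4s_5, and s_1, s_3 joined to every c_j). Then for every edge e of G, γ_t(G − e) ≤ 2n + 3. -/
import Mathlib


/-- A literal over `n` variables: a variable index together with a polarity
(`true` = the positive literal `uᵢ`, `false` = the negated literal `ūᵢ`). -/
abbrev Lit (n : ℕ) := Fin n × Bool

/-- Vertex type of the total-bondage construction: literal vertices `uᵢ, ūᵢ`,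
gadget vertices `vᵢ` (second component `false`) and `vᵢ'` (second component
`true`), clause vertices `cⱼ`, and the vertices `s₁, …, s₅`. -/
abbrev TVert (n m : ℕ) := Lit n ⊕ ((Fin n × Bool) ⊕ (Fin m ⊕ Fin 5))

/-- The literal vertex `uᵢ` (if `b = true`) or `ūᵢ` (if `b = false`). -/
def tlit {n m : ℕ} (i : Fin n) (b : Bool) : TVert n m := Sum.inl (i, b)

/-- The gadget vertex `vᵢ`. -/
def tvv {n m : ℕ} (i : Fin n) : TVert n m := Sum.inr (Sum.inl (i, false))

/-- The gadget vertex `vᵢ'`. -/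
def tvv' {n m : ℕ} (i : Fin n) : TVert n m := Sum.inr (Sum.inl (i, true))

/-- The clause vertex `cⱼ`. -/
def tcv {n m : ℕ} (j : Fin m) : TVert n m := Sum.inr (Sum.inr (Sum.inl j))

/-- The vertex `s₍ₖ₊₁₎` for `k : Fin 5` (so `tsv 0 = s₁`, …, `tsv 4 = s₅`). -/
def tsv {n m : ℕ} (k : Fin 5) : TVert n m := Sum.inr (Sum.inr (Sum.inr k))

/-- Base adjacency relation of the total-bondage construction (symmetrized by
`fromRel`): gadget edges `vᵢuᵢ, uᵢūᵢ, ūᵢvᵢ, vᵢvᵢ'`; clause edges joining `cⱼ`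
to its three literals; gadget `H` edges `s₁s₂, s₁s₄, s₂s₃, s₂s₄, s₄s₅`; and the
edges joining `s₁` and `s₃` to every `cⱼ`. -/
def totRel {n m : ℕ} (C : Fin m → Fin 3 → Lit n) : TVert n m → TVert n m → Prop
  | Sum.inl (i, b), Sum.inl (i', b') => i = i' ∧ b ≠ b'
  | Sum.inl (i, _), Sum.inr (Sum.inl (i', c)) => i = i' ∧ c = false
  | Sum.inr (Sum.inl (i, false)), Sum.inr (Sum.inl (i', true)) => i = i'
  | Sum.inl l, Sum.inr (Sum.inr (Sum.inl j)) => ∃ k, C j k = l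
  | Sum.inr (Sum.inr (Sum.inr p)), Sum.inr (Sum.inr (Sum.inr q)) =>
      (p = 0 ∧ q = 1) ∨ (p = 0 ∧ q = 3) ∨ (p = 1 ∧ q = 2) ∨ (p = 1 ∧ q = 3) ∨
        (p = 3 ∧ q = 4)
  | Sum.inr (Sum.inr (Sum.inr p)), Sum.inr (Sum.inr (Sum.inl _)) => p = 0 ∨ p = 2
  | _, _ => False

/-- The graph of the total-bondage construction associated with a 3-SAT instance `C`. -/
def totGraph {n m : ℕ} (C : Fin m → Fin 3 → Lit n) : SimpleGraph (TVert n m) :=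
  SimpleGraph.fromRel (totRel C)

/-- `D` is a total dominating set of `G`: every vertex of `G` (including the
vertices of `D`) has a neighbor in `D`. -/
def IsTotalDomSet {V : Type*} (G : SimpleGraph V) (D : Finset V) : Prop :=
  ∀ v : V, ∃ u ∈ D, G.Adj u v

/-- The total domination number of `G`: the minimum cardinality of a total
dominating set. -/
noncomputable def totalDomNum {V : Type*} (G : SimpleGraph V) : ℕ :=
  sInf {k | ∃ D : Finset V, IsTotalDomSet G D ∧ D.card = k}


section
variable {n m : ℕ} (C : Fin m → Fin 3 → Lit n)

lemma adj_vv' (i : Fin n) : (totGraph C).Adj (tvv i) (tvv' i) := by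
  simp [totGraph, SimpleGraph.fromRel_adj, tvv, tvv', totRel]

lemma adj_v_lit (i : Fin n) (b : Bool) : (totGraph C).Adj (tvv i) (tlit i b) := by
  simp [totGraph, SimpleGraph.fromRel_adj, tvv, tlit, totRel]

lemma adj_lit_lit (i : Fin n) : (totGraph C).Adj (tlit (n := n) (m := m) i true) (tlit i false) := by
  simp [totGraph, SimpleGraph.fromRel_adj, tlit, totRel]

lemma adj_lit_c (j : Fin m) (k : Fin 3) : (totGraph C).Adj (tlit (C j k).1 (C j k).2) (tcv j) := by
  simp only [totGraph, SimpleGraph.fromRel_adj, tlit, tcv, totRel]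
  exact ⟨by simp, Or.inl ⟨k, rfl⟩⟩

lemma adj_s_c (j : Fin m) (p : Fin 5) (hp : p = 0 ∨ p = 2) : (totGraph C).Adj (tsv p) (tcv j) := by
  simp [totGraph, SimpleGraph.fromRel_adj, tsv, tcv, totRel, hp]

lemma adj_ss (p q : Fin 5) (h : (p = 0 ∧ q = 1) ∨ (p = 0 ∧ q = 3) ∨ (p = 1 ∧ q = 2) ∨ (p = 1 ∧ q = 3) ∨
        (p = 3 ∧ q = 4)) : (totGraph C).Adj (tsv p) (tsv q) := by
  simp only [totGraph, SimpleGraph.fromRel_adj, tsv, totRel]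
  constructor
  · rcases h with ⟨h1,h2⟩|⟨h1,h2⟩|⟨h1,h2⟩|⟨h1,h2⟩|⟨h1,h2⟩ <;> subst h1 <;> subst h2 <;> simp
  · exact Or.inl h

end

section
variable {n m : ℕ} {C : Fin m → Fin 3 → Lit n}

lemma nbr_vv' {i : Fin n} {u : TVert n m} (h : (totGraph C).Adj u (tvv' i)) : u = tvv i := by
  simp only [totGraph, SimpleGraph.fromRel_adj, tvv'] at h
  obtain ⟨-, h | h⟩ := h <;>
    rcases u with ⟨i', _|_⟩ | ⟨⟨i', _|_⟩ | j' | p'⟩ <;> simp_all [totRel, tvv]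

lemma nbr_s5 {u : TVert n m} (h : (totGraph C).Adj u (tsv 4)) : u = tsv 3 := by
  simp only [totGraph, SimpleGraph.fromRel_adj, tsv] at h
  obtain ⟨hne, h | h⟩ := h <;>
    rcases u with ⟨i', _|_⟩ | ⟨⟨i', _|_⟩ | j' | p'⟩ <;> simp_all [totRel, tsv] <;> omega

lemma nbr_s3 (hm : m = 0) {u : TVert n m} (h : (totGraph C).Adj u (tsv 2)) : u = tsv 1 := by
  subst hm
  simp only [totGraph, SimpleGraph.fromRel_adj, tsv] at h
  obtain ⟨hne, h | h⟩ := h <;>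
    rcases u with ⟨i', _|_⟩ | ⟨⟨i', _|_⟩ | j' | p'⟩ <;> simp_all [totRel, tsv] <;>
      first | exact j'.elim0 | omega | rfl

end

section
variable {V : Type*} {G : SimpleGraph V}

lemma totalDomNum_le_card {D : Finset V} (h : IsTotalDomSet G D) :
    totalDomNum G ≤ D.card :=
  Nat.sInf_le ⟨D, h, rfl⟩

lemma totalDomNum_eq_zero {v : V} (h : ∀ u, ¬ G.Adj u v) : totalDomNum G = 0 := by
  rw [totalDomNum, Nat.sInf_eq_zero]
  right
  ext k
  simp only [Set.mem_setOf_eq, Set.mem_empty_iff_false, iff_false]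
  rintro ⟨D, hD, -⟩
  obtain ⟨u, -, hu⟩ := hD v
  exact h u hu

lemma two_dom {D : Finset V} {e : Sym2 V} {u₁ u₂ v : V} (h₁ : u₁ ∈ D) (h₂ : u₂ ∈ D)
    (hne : u₁ ≠ u₂) (ha₁ : G.Adj u₁ v) (ha₂ : G.Adj u₂ v) :
    ∃ u ∈ D, (G.deleteEdges {e}).Adj u v := by
  by_cases h : s(u₁, v) = e
  · refine ⟨u₂, h₂, ?_⟩
    rw [SimpleGraph.deleteEdges_adj]
    refine ⟨ha₂, ?_⟩
    simp only [Set.mem_singleton_iff, ← h, Sym2.eq_iff]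
    rintro (⟨rfl, -⟩ | ⟨rfl, rfl⟩)
    · exact hne rfl
    · exact G.irrefl ha₁
  · exact ⟨u₁, h₁, by rw [SimpleGraph.deleteEdges_adj]; exact ⟨ha₁, by simpa using h⟩⟩

lemma one_dom {D : Finset V} {e : Sym2 V} {u v : V} (h : u ∈ D) (ha : G.Adj u v)
    (hne : s(u, v) ≠ e) : ∃ u ∈ D, (G.deleteEdges {e}).Adj u v :=
  ⟨u, h, by rw [SimpleGraph.deleteEdges_adj]; exact ⟨ha, by simpa using hne⟩⟩

end

section
variable {n m : ℕ} {C : Fin m → Fin 3 → Lit n}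

/-- Candidate total dominating set: all `vᵢ`, one literal per variable, plus `S`. -/
def Dset (f : Fin n → Bool) (S : Finset (TVert n m)) : Finset (TVert n m) :=
  (Finset.univ.image tvv) ∪ (Finset.univ.image fun i => tlit i (f i)) ∪ S

lemma Dset_card_le {f : Fin n → Bool} {S : Finset (TVert n m)} (hS : S.card ≤ 3) :
    (Dset f S).card ≤ 2 * n + 3 := by
  have h1 := Finset.card_union_le ((Finset.univ.image (tvv (n := n) (m := m))) ∪
    (Finset.univ.image fun i => tlit i (f i))) S
  have h2 := Finset.card_union_le (Finset.univ.image (tvv (n := n) (m := m)))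
    (Finset.univ.image fun i => tlit i (f i))
  have h3 := Finset.card_image_le (s := (Finset.univ : Finset (Fin n))) (f := tvv (n := n) (m := m))
  have h4 := Finset.card_image_le (s := (Finset.univ : Finset (Fin n)))
    (f := fun i => tlit (n := n) (m := m) i (f i))
  simp only [Finset.card_univ, Fintype.card_fin] at h3 h4
  calc (Dset f S).card ≤ _ + S.card := h1
    _ ≤ 2 * n + 3 := by omega

lemma mem_Dset_vv {f : Fin n → Bool} {S : Finset (TVert n m)} (i : Fin n) :
    tvv i ∈ Dset f S := by
  simp only [Dset, Finset.mem_union, Finset.mem_image]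
  exact Or.inl (Or.inl ⟨i, Finset.mem_univ i, rfl⟩)

lemma mem_Dset_lit {f : Fin n → Bool} {S : Finset (TVert n m)} (i : Fin n) :
    tlit i (f i) ∈ Dset f S := by
  simp only [Dset, Finset.mem_union, Finset.mem_image]
  exact Or.inl (Or.inr ⟨i, Finset.mem_univ i, rfl⟩)

lemma mem_Dset_S {f : Fin n → Bool} {S : Finset (TVert n m)} {x : TVert n m} (hx : x ∈ S) :
    x ∈ Dset f S := Finset.mem_union_right _ hx

lemma dom_lit {e : Sym2 (TVert n m)} {f : Fin n → Bool} {S : Finset (TVert n m)}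
    (hf : ∀ i, s(tvv i, tlit i (f i)) ≠ e) (i : Fin n) (b : Bool) :
    ∃ u ∈ Dset f S, (((totGraph C).deleteEdges {e})).Adj u (tlit i b) := by
  by_cases hb : b = f i
  · subst hb
    exact one_dom (mem_Dset_vv i) (adj_v_lit C i (f i)) (hf i)
  · refine two_dom (mem_Dset_vv i) (mem_Dset_lit i) (by simp [tvv, tlit])
      (adj_v_lit C i b) ?_
    have hfi : f i = !b := Bool.eq_not_of_ne (Ne.symm hb)
    rw [hfi]
    cases b
    · exact adj_lit_lit C i
    · exact (adj_lit_lit C i).symm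

lemma dom_vv {e : Sym2 (TVert n m)} {f : Fin n → Bool} {S : Finset (TVert n m)}
    (hf : ∀ i, s(tvv i, tlit i (f i)) ≠ e) (i : Fin n) :
    ∃ u ∈ Dset f S, (((totGraph C).deleteEdges {e})).Adj u (tvv i) := by
  refine one_dom (mem_Dset_lit i) (adj_v_lit C i (f i)).symm ?_
  rw [Sym2.eq_swap]
  exact hf i

lemma dom_vv' {e : Sym2 (TVert n m)} {f : Fin n → Bool} {S : Finset (TVert n m)}
    (hvv : ∀ i, s(tvv i, tvv' i) ≠ e) (i : Fin n) :
    ∃ u ∈ Dset f S, (((totGraph C).deleteEdges {e})).Adj u (tvv' i) :=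
  one_dom (mem_Dset_vv i) (adj_vv' C i) (hvv i)

end

lemma card_triple_le {α : Type*} [DecidableEq α] (a b c : α) :
    ({a, b, c} : Finset α).card ≤ 3 := by
  refine le_trans (Finset.card_insert_le _ _) (Nat.succ_le_succ ?_)
  refine le_trans (Finset.card_insert_le _ _) (Nat.succ_le_succ ?_)
  exact Finset.card_singleton b ▸ le_refl 1


/-- In the total-bondage construction, `γ_t(G − e) ≤ 2n + 3` for every edge `e`. -/
theorem totGraph_totalDomNum_deleteEdge_le {n m : ℕ} (C : Fin m → Fin 3 → Lit n) :
    ∀ e ∈ (totGraph C).edgeSet,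
      totalDomNum ((totGraph C).deleteEdges {e}) ≤ 2 * n + 3 := by
  intro e _he
  -- pendant edge cases: deleting them isolates a vertex, so no total dominating set exists
  by_cases hvv : ∃ i, e = s(tvv (n := n) (m := m) i, tvv' i)
  · obtain ⟨i, rfl⟩ := hvv
    have h0 : totalDomNum ((totGraph C).deleteEdges {s(tvv i, tvv' i)}) = 0 := by
      refine totalDomNum_eq_zero (v := tvv' i) ?_
      intro u hu
      rw [SimpleGraph.deleteEdges_adj] at hu
      obtain ⟨hadj, hne⟩ := hu
      obtain rfl := nbr_vv' hadj
      exact hne (by simp)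
    omega
  by_cases hs45 : e = s(tsv (n := n) (m := m) 3, tsv 4)
  · subst hs45
    have h0 : totalDomNum ((totGraph C).deleteEdges {s(tsv (n := n) (m := m) 3, tsv 4)}) = 0 := by
      refine totalDomNum_eq_zero (v := tsv 4) ?_
      intro u hu
      rw [SimpleGraph.deleteEdges_adj] at hu
      obtain ⟨hadj, hne⟩ := hu
      obtain rfl := nbr_s5 hadj
      exact hne (by simp)
    omega
  by_cases hs12m : e = s(tsv (n := n) (m := m) 1, tsv 2) ∧ m = 0
  · obtain ⟨rfl, hm⟩ := hs12m
    have h0 : totalDomNum ((totGraph C).deleteEdges {s(tsv (n := n) (m := m) 1, tsv 2)}) = 0 := by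
      refine totalDomNum_eq_zero (v := tsv 2) ?_
      intro u hu
      rw [SimpleGraph.deleteEdges_adj] at hu
      obtain ⟨hadj, hne⟩ := hu
      obtain rfl := nbr_s3 hm hadj
      exact hne (by simp)
    omega
  -- choice of literal per variable, avoiding the deleted edge
  set f : Fin n → Bool := fun i => if e = s(tvv i, tlit i true) then false else true with hfdef
  have hf : ∀ i, s(tvv (n := n) (m := m) i, tlit i (f i)) ≠ e := by
    intro i
    by_cases h : e = s(tvv i, tlit i true)
    · rw [hfdef]
      simp only [h, if_pos]
      simp [Sym2.eq_iff, tvv, tlit]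
    · rw [hfdef]
      simp only [h, if_neg]
      exact fun hh => h hh.symm
  have hvv' : ∀ i, s(tvv (n := n) (m := m) i, tvv' i) ≠ e := fun i h => hvv ⟨i, h.symm⟩
  by_cases h23 : e = s(tsv (n := n) (m := m) 1, tsv 2)
  · -- deleted edge is s₂s₃; here m ≠ 0, use S = {s₁, s₄, c₀}
    have hm : m ≠ 0 := fun h0 => hs12m ⟨h23, h0⟩
    subst h23
    set j0 : Fin m := ⟨0, Nat.pos_of_ne_zero hm⟩ with hj0
    set S : Finset (TVert n m) := {tsv 0, tsv 3, tcv j0} with hS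
    have hD : IsTotalDomSet ((totGraph C).deleteEdges {s(tsv (n := n) (m := m) 1, tsv 2)})
        (Dset f S) := by
      rintro (⟨i, b⟩ | ⟨⟨i, (_ | _)⟩ | j | p⟩)
      · exact dom_lit hf i b
      · exact dom_vv hf i
      · exact dom_vv' hvv' i
      · refine one_dom (mem_Dset_S (by simp [hS])) (adj_s_c C j 0 (Or.inl rfl)) ?_
        simp [Sym2.eq_iff, tsv, tcv]
      · fin_cases p
        · refine two_dom (u₁ := tsv 3) (u₂ := tcv j0) (mem_Dset_S (by simp [hS]))
            (mem_Dset_S (by simp [hS])) (by simp [tsv, tcv])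
            (adj_ss C 0 3 (by decide)).symm (adj_s_c C j0 0 (Or.inl rfl)).symm
        · refine two_dom (u₁ := tsv 0) (u₂ := tsv 3) (mem_Dset_S (by simp [hS]))
            (mem_Dset_S (by simp [hS])) (by simp [tsv])
            (adj_ss C 0 1 (by decide)) (adj_ss C 1 3 (by decide)).symm
        · refine one_dom (mem_Dset_S (by simp [hS])) (adj_s_c C j0 2 (Or.inr rfl)).symm ?_
          simp [Sym2.eq_iff, tsv, tcv]
        · refine one_dom (u := tsv 0) (mem_Dset_S (by simp [hS])) (adj_ss C 0 3 (by decide)) ?_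
          simp [Sym2.eq_iff, tsv]
        · refine one_dom (u := tsv 3) (mem_Dset_S (by simp [hS])) (adj_ss C 3 4 (by decide)) ?_
          simp [Sym2.eq_iff, tsv]
    exact le_trans (totalDomNum_le_card hD) (Dset_card_le (card_triple_le _ _ _))
  by_cases hcl : ∃ j, e = s(tsv (n := n) (m := m) 0, tcv j)
  · -- deleted edge is s₁cⱼ₀; use S = {s₂, s₃, s₄}
    obtain ⟨j0, rfl⟩ := hcl
    set S : Finset (TVert n m) := {tsv 1, tsv 2, tsv 3} with hS
    have hD : IsTotalDomSet ((totGraph C).deleteEdges {s(tsv (n := n) (m := m) 0, tcv j0)})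
        (Dset f S) := by
      rintro (⟨i, b⟩ | ⟨⟨i, (_ | _)⟩ | j | p⟩)
      · exact dom_lit hf i b
      · exact dom_vv hf i
      · exact dom_vv' hvv' i
      · refine one_dom (mem_Dset_S (by simp [hS])) (adj_s_c C j 2 (Or.inr rfl)) ?_
        simp [Sym2.eq_iff, tsv, tcv]
      · fin_cases p
        · refine two_dom (u₁ := tsv 1) (u₂ := tsv 3) (mem_Dset_S (by simp [hS]))
            (mem_Dset_S (by simp [hS])) (by simp [tsv])
            (adj_ss C 0 1 (by decide)).symm (adj_ss C 0 3 (by decide)).symm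
        · refine two_dom (u₁ := tsv 2) (u₂ := tsv 3) (mem_Dset_S (by simp [hS]))
            (mem_Dset_S (by simp [hS])) (by simp [tsv])
            (adj_ss C 1 2 (by decide)).symm (adj_ss C 1 3 (by decide)).symm
        · refine one_dom (u := tsv 1) (mem_Dset_S (by simp [hS])) (adj_ss C 1 2 (by decide)) ?_
          simp [Sym2.eq_iff, tsv, tcv]
        · refine one_dom (u := tsv 1) (mem_Dset_S (by simp [hS])) (adj_ss C 1 3 (by decide)) ?_
          simp [Sym2.eq_iff, tsv, tcv]
        · refine one_dom (u := tsv 3) (mem_Dset_S (by simp [hS])) (adj_ss C 3 4 (by decide)) ?_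
          simp [Sym2.eq_iff, tsv, tcv]
    exact le_trans (totalDomNum_le_card hD) (Dset_card_le (card_triple_le _ _ _))
  · -- generic case: use S = {s₁, s₂, s₄}
    set S : Finset (TVert n m) := {tsv 0, tsv 1, tsv 3} with hS
    have hD : IsTotalDomSet ((totGraph C).deleteEdges {e}) (Dset f S) := by
      rintro (⟨i, b⟩ | ⟨⟨i, (_ | _)⟩ | j | p⟩)
      · exact dom_lit hf i b
      · exact dom_vv hf i
      · exact dom_vv' hvv' i
      · exact one_dom (mem_Dset_S (by simp [hS])) (adj_s_c C j 0 (Or.inl rfl))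
          (fun h => hcl ⟨j, h.symm⟩)
      · fin_cases p
        · refine two_dom (u₁ := tsv 1) (u₂ := tsv 3) (mem_Dset_S (by simp [hS]))
            (mem_Dset_S (by simp [hS])) (by simp [tsv])
            (adj_ss C 0 1 (by decide)).symm (adj_ss C 0 3 (by decide)).symm
        · refine two_dom (u₁ := tsv 0) (u₂ := tsv 3) (mem_Dset_S (by simp [hS]))
            (mem_Dset_S (by simp [hS])) (by simp [tsv])
            (adj_ss C 0 1 (by decide)) (adj_ss C 1 3 (by decide)).symm
        · exact one_dom (mem_Dset_S (by simp [hS])) (adj_ss C 1 2 (by decide))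
            (fun h => h23 h.symm)
        · refine two_dom (u₁ := tsv 0) (u₂ := tsv 1) (mem_Dset_S (by simp [hS]))
            (mem_Dset_S (by simp [hS])) (by simp [tsv])
            (adj_ss C 0 3 (by decide)) (adj_ss C 1 3 (by decide))
        · exact one_dom (mem_Dset_S (by simp [hS])) (adj_ss C 3 4 (by decide))
            (fun h => hs45 h.symm)
    exact le_trans (totalDomNum_le_card hD) (Dset_card_le (card_triple_le _ _ _))
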